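/- arXiv:1309.7507 — 11 statements merged into one kernel-verified Lean document; each statement's English description precedes it below -/
import Mathlib

section
/- Let λ₁, λ₂ > 0, f₁ > 0, f₂ < 0, ρ > 0 with Φ(ρ) = (ρ+λ₁-f₁)(ρ+λ₂-f₂) - λ₁λ₂ > 0. With D₁ = (ρ+λ₁)f₂ + (ρ+λ₂)f₁, D₂ = (ρ+λ₁)(ρ+λ₂) - λ₁λ₂, and β₂ = (D₁ - sqrt(D₁² - 4f₁f₂D₂))/(2f₁f₂), we have β₂ > 1. -/
theorem beta2_gt_one
    (l1 l2 f1 f2 ρ : ℝ)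
    (hl1 : 0 < l1) (hl2 : 0 < l2) (hf1 : 0 < f1) (hf2 : f2 < 0) (hρ : 0 < ρ)
    (hΦ : (ρ + l1 - f1) * (ρ + l2 - f2) - l1 * l2 > 0)
    (D1 D2 β2 : ℝ)
    (hD1 : D1 = (ρ + l1) * f2 + (ρ + l2) * f1)
    (hD2 : D2 = (ρ + l1) * (ρ + l2) - l1 * l2)
    (hβ2 : β2 = (D1 - Real.sqrt (D1 ^ 2 - 4 * f1 * f2 * D2)) / (2 * f1 * f2)) :
    β2 > 1 := by
  have hff : f1 * f2 < 0 := mul_neg_of_pos_of_neg hf1 hf2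
  have hkey : (D1 - 2 * (f1 * f2)) ^ 2 < D1 ^ 2 - 4 * f1 * f2 * D2 := by
    nlinarith [hΦ, hff]
  have hs : D1 - 2 * (f1 * f2) < Real.sqrt (D1 ^ 2 - 4 * f1 * f2 * D2) := by
    have h1 : |D1 - 2 * (f1 * f2)| < Real.sqrt (D1 ^ 2 - 4 * f1 * f2 * D2) := by
      rw [← Real.sqrt_sq_eq_abs]
      exact Real.sqrt_lt_sqrt (sq_nonneg _) hkey
    calc D1 - 2 * (f1 * f2) ≤ |D1 - 2 * (f1 * f2)| := le_abs_self _
      _ < _ := h1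
  rw [hβ2, gt_iff_lt, lt_div_iff_of_neg (by linarith : 2 * f1 * f2 < 0)]
  linarith
end

section
/- Let λ₁, λ₂ > 0, f₁ > 0, f₂ < 0, ρ > 0 with Φ(ρ) > 0. With β₂ = (D₁ - sqrt(D₁² - 4f₁f₂D₂))/(2f₁f₂) where D₁ = (ρ+λ₁)f₂ + (ρ+λ₂)f₁ and D₂ = (ρ+λ₁)(ρ+λ₂) - λ₁λ₂, define κ₂ = (ρ + λ₁ - f₁β₂)/λ₁. Then 0 < κ₂ < 1. -/
theorem kappa2_in_unit_interval
    (l1 l2 f1 f2 ρ : ℝ)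
    (hl1 : 0 < l1) (hl2 : 0 < l2) (hf1 : 0 < f1) (hf2 : f2 < 0) (hρ : 0 < ρ)
    (hΦ : (ρ + l1 - f1) * (ρ + l2 - f2) - l1 * l2 > 0)
    (D1 D2 β2 κ2 : ℝ)
    (hD1 : D1 = (ρ + l1) * f2 + (ρ + l2) * f1)
    (hD2 : D2 = (ρ + l1) * (ρ + l2) - l1 * l2)
    (hβ2 : β2 = (D1 - Real.sqrt (D1 ^ 2 - 4 * f1 * f2 * D2)) / (2 * f1 * f2))
    (hκ2 : κ2 = (ρ + l1 - f1 * β2) / l1) :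
    0 < κ2 ∧ κ2 < 1 := by
  have hD2pos : 0 < D2 := by rw [hD2]; nlinarith
  have hdisc : 0 < D1 ^ 2 - 4 * f1 * f2 * D2 := by nlinarith [sq_nonneg D1, mul_pos (mul_pos hf1 hD2pos) (neg_pos.mpr hf2)]
  set s := Real.sqrt (D1 ^ 2 - 4 * f1 * f2 * D2) with hs
  have hs0 : 0 ≤ s := Real.sqrt_nonneg _
  have hs2 : s ^ 2 = D1 ^ 2 - 4 * f1 * f2 * D2 := Real.sq_sqrt hdisc.le
  have hup : s < D1 - 2 * (ρ + l1) * f2 := by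
    have hR : 0 < D1 - 2 * (ρ + l1) * f2 := by rw [hD1]; nlinarith
    have hsq : s ^ 2 < (D1 - 2 * (ρ + l1) * f2) ^ 2 := by
      rw [hs2, hD1, hD2]
      nlinarith [mul_pos (mul_pos (mul_pos hf1 hl1) hl2) (neg_pos.mpr hf2)]
    nlinarith
  have hlow : D1 - 2 * ρ * f2 < s := by
    have hsq : (D1 - 2 * ρ * f2) ^ 2 < s ^ 2 := by
      rw [hs2, hD1, hD2]; nlinarith [mul_pos (mul_pos (mul_pos (neg_pos.mpr hf2) hl1) hρ) (by linarith : (0:ℝ) < f1 - f2)]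
    nlinarith
  have hf1β2 : f1 * β2 = (D1 - s) / (2 * f2) := by
    rw [hβ2]; field_simp [hf1.ne', hf2.ne]
  have h2f2 : 2 * f2 < 0 := by linarith
  have hub : f1 * β2 < ρ + l1 := by
    rw [hf1β2, div_lt_iff_of_neg h2f2]; linarith
  have hlb : ρ < f1 * β2 := by
    rw [hf1β2, lt_div_iff_of_neg h2f2]; linarith
  constructor
  · rw [hκ2]; exact div_pos (by linarith) hl1
  · rw [hκ2, div_lt_one hl1]; linarith
end

section
/- Let λ₁, λ₂ > 0, f₁ > 0, f₂ < 0, ρ > f₁ with Φ(ρ) > 0, and let β₂ = (D₁ - sqrt(D₁² - 4f₁f₂D₂))/(2f₁f₂) with D₁ = (ρ+λ₁)f₂ + (ρ+λ₂)f₁, D₂ = (ρ+λ₁)(ρ+λ₂) - λ₁λ₂. Then for any K, with K > 0, we have Kβ₂/(β₂ - 1) < ρK/(ρ - f₁); equivalently f₁β₂ > ρ. -/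
theorem K_beta2_lemma
    (l1 l2 f1 f2 ρ : ℝ)
    (hl1 : 0 < l1) (hl2 : 0 < l2) (hf1 : 0 < f1) (hf2 : f2 < 0) (hρf1 : ρ > f1)
    (hΦ : (ρ + l1 - f1) * (ρ + l2 - f2) - l1 * l2 > 0)
    (D1 D2 β2 : ℝ)
    (hD1 : D1 = (ρ + l1) * f2 + (ρ + l2) * f1)
    (hD2 : D2 = (ρ + l1) * (ρ + l2) - l1 * l2)
    (hβ2 : β2 = (D1 - Real.sqrt (D1 ^ 2 - 4 * f1 * f2 * D2)) / (2 * f1 * f2)) :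
    (∀ K : ℝ, 0 < K → K * β2 / (β2 - 1) < ρ * K / (ρ - f1)) ∧ f1 * β2 > ρ := by
  have hρ : 0 < ρ := lt_trans hf1 hρf1
  have hD2pos : 0 < D2 := by rw [hD2]; nlinarith
  have hdisc : 0 ≤ D1 ^ 2 - 4 * f1 * f2 * D2 := by nlinarith [mul_pos hf1 hD2pos]
  set s := Real.sqrt (D1 ^ 2 - 4 * f1 * f2 * D2) with hs
  have hs0 : 0 ≤ s := Real.sqrt_nonneg _
  have hs2 : s ^ 2 = D1 ^ 2 - 4 * f1 * f2 * D2 := Real.sq_sqrt hdisc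
  have hprod : (0:ℝ) < l1 * ρ * (f1 - f2) * (-f2) :=
    mul_pos (mul_pos (mul_pos hl1 hρ) (by linarith)) (by linarith)
  have key : (D1 - 2 * f2 * ρ) ^ 2 < s ^ 2 := by
    rw [hs2, hD1, hD2]; nlinarith [hprod]
  have hlt : D1 - 2 * f2 * ρ < s := by nlinarith [key, hs0]
  have h2ff : 2 * f1 * f2 < 0 := by nlinarith
  have hβρ : ρ / f1 < β2 := by
    rw [hβ2, lt_div_iff_of_neg h2ff]
    have : ρ / f1 * (2 * f1 * f2) = 2 * f2 * ρ := by field_simp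
    rw [this]; linarith
  have hfβ : f1 * β2 > ρ := by
    have := (div_lt_iff₀ hf1).mp hβρ
    linarith [this]
  refine ⟨fun K hK => ?_, hfβ⟩
  have hβ1 : 1 < β2 := by
    have h1 : (1:ℝ) < ρ / f1 := (one_lt_div hf1).mpr hρf1
    linarith
  rw [div_lt_div_iff₀ (by linarith) (by linarith)]
  nlinarith [mul_pos hK (sub_pos.mpr hfβ)]
end

section
/- Let λ₁, λ₂ > 0, f₁ > 0, f₂ < 0, ρ > f₁ with Φ(ρ) = (ρ+λ₁-f₁)(ρ+λ₂-f₂) - λ₁λ₂ > 0. With κ₂ = (ρ + λ₁ - f₁β₂)/λ₁ and β₂ as before, we have λ₂ - κ₂(ρ + λ₂ - f₂) > 0, and consequently λ₂ - κ₂(ρ + λ₂) > 0. -/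
set_option maxHeartbeats 1000000


theorem cond3_ineq
    (l1 l2 f1 f2 ρ : ℝ)
    (hl1 : 0 < l1) (hl2 : 0 < l2) (hf1 : 0 < f1) (hf2 : f2 < 0) (hρf1 : ρ > f1)
    (hΦ : (ρ + l1 - f1) * (ρ + l2 - f2) - l1 * l2 > 0)
    (D1 D2 β2 κ2 : ℝ)
    (hD1 : D1 = (ρ + l1) * f2 + (ρ + l2) * f1)
    (hD2 : D2 = (ρ + l1) * (ρ + l2) - l1 * l2)
    (hβ2 : β2 = (D1 - Real.sqrt (D1 ^ 2 - 4 * f1 * f2 * D2)) / (2 * f1 * f2))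
    (hκ2 : κ2 = (ρ + l1 - f1 * β2) / l1) :
    l2 - κ2 * (ρ + l2 - f2) > 0 ∧ l2 - κ2 * (ρ + l2) > 0 := by
  have hρ : 0 < ρ := lt_trans hf1 hρf1
  have hf2' : f2 ≠ 0 := ne_of_lt hf2
  have hf1' : f1 ≠ 0 := ne_of_gt hf1
  have hl1' : l1 ≠ 0 := ne_of_gt hl1
  obtain ⟨x, hx⟩ : ∃ x, x = Real.sqrt (D1 ^ 2 - 4 * f1 * f2 * D2) := ⟨_, rfl⟩
  rw [← hx] at hβ2
  have hD2pos : 0 < D2 := by rw [hD2]; nlinarith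
  have hdisc : 0 ≤ D1 ^ 2 - 4 * f1 * f2 * D2 := by
    nlinarith [sq_nonneg D1, mul_pos (mul_pos hf1 (neg_pos.mpr hf2)) hD2pos]
  have hx2 : x ^ 2 = D1 ^ 2 - 4 * f1 * f2 * D2 := by rw [hx]; exact Real.sq_sqrt hdisc
  have hx0 : 0 ≤ x := hx ▸ Real.sqrt_nonneg _
  have hH0 : 0 < ρ + l2 - f2 := by nlinarith
  have hsq : (x * (ρ + l2 - f2)) ^ 2
      - (D1 * (ρ + l2 - f2) - 2 * f2 * ((ρ + l1) * (ρ + l2 - f2) - l1 * l2)) ^ 2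
      = 4 * f2 ^ 2 * l1 * l2 * ((ρ + l1 - f1) * (ρ + l2 - f2) - l1 * l2) := by
    rw [mul_pow, hx2, hD1, hD2]; ring
  have h4 : (0:ℝ) < 4 * f2 ^ 2 * l1 * l2 * ((ρ + l1 - f1) * (ρ + l2 - f2) - l1 * l2) := by
    have hf22 : (0:ℝ) < 4 * f2 ^ 2 := by positivity
    exact mul_pos (mul_pos (mul_pos hf22 hl1) hl2) hΦ
  have hsqpos : (x * (ρ + l2 - f2)) ^ 2
      - (D1 * (ρ + l2 - f2) - 2 * f2 * ((ρ + l1) * (ρ + l2 - f2) - l1 * l2)) ^ 2 > 0 := by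
    rw [hsq]; exact h4
  have key : x * (ρ + l2 - f2) > D1 * (ρ + l2 - f2) - 2 * f2 * ((ρ + l1) * (ρ + l2 - f2) - l1 * l2) := by
    nlinarith [mul_nonneg hx0 hH0.le]
  have expand : (l2 - κ2 * (ρ + l2 - f2)) * ((-f2) * l1 * 2)
      = x * (ρ + l2 - f2) - (D1 * (ρ + l2 - f2) - 2 * f2 * ((ρ + l1) * (ρ + l2 - f2) - l1 * l2)) := by
    rw [hκ2, hβ2]
    field_simp
    ring
  have hc : (0:ℝ) < (-f2) * l1 * 2 := mul_pos (mul_pos (neg_pos.mpr hf2) hl1) two_pos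
  have g1 : l2 - κ2 * (ρ + l2 - f2) > 0 := by nlinarith [expand, key, hc]
  refine ⟨g1, ?_⟩
  rcases le_or_gt κ2 0 with h | h
  · nlinarith
  · nlinarith
end

section
/- Let λ₁, λ₂ > 0, f₁ > 0, f₂ < 0, 0 < ρ ≤ f₁ with Φ(ρ) > 0, K > 0. Define A₀ = λ₁/(ρ+λ₁-f₁), B₀ = -λ₁K/(ρ+λ₁), κ₂ = (ρ+λ₁-f₁β₂)/λ₁, and x* = -(K + κ₂B₀)/(κ₂A₀ - 1). Then x* = ((ρ+λ₁-f₁)/(ρ+λ₁)) · (Kβ₂/(β₂-1)). -/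
section SellingThreshold

variable {l f ρ K β : ℝ}

theorem kappa_mul_A_sub_one (hl : l ≠ 0) (ha : ρ + l - f ≠ 0) :
    (ρ + l - f * β) / l * (l / (ρ + l - f)) - 1 = f * (1 - β) / (ρ + l - f) := by
  field_simp
  ring

theorem K_add_kappa_mul_B (hl : l ≠ 0) (hc : ρ + l ≠ 0) :
    K + (ρ + l - f * β) / l * (-(l * K) / (ρ + l)) = f * β * K / (ρ + l) := by
  field_simp
  ring

/-- At `β = 1` both sides vanish, by Lean's convention `x / 0 = 0`. -/
theorem selling_threshold_eq (hl : l ≠ 0) (hf : f ≠ 0) (ha : ρ + l - f ≠ 0) (hc : ρ + l ≠ 0) :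
    -(K + (ρ + l - f * β) / l * (-(l * K) / (ρ + l))) /
        ((ρ + l - f * β) / l * (l / (ρ + l - f)) - 1) =
      (ρ + l - f) / (ρ + l) * (K * β / (β - 1)) := by
  rw [K_add_kappa_mul_B hl hc, kappa_mul_A_sub_one hl ha]
  rcases eq_or_ne β 1 with rfl | hβ
  · simp
  · have hβ' : 1 - β ≠ 0 := sub_ne_zero.mpr hβ.symm
    have hβ'' : β - 1 ≠ 0 := sub_ne_zero.mpr hβ
    field_simp
    ring

end SellingThreshold

theorem xstar_alternative_general
    (l1 l2 f1 f2 ρ K : ℝ)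
    (hl1 : 0 < l1) (hl2 : 0 < l2) (hf1 : 0 < f1)
    (hρ : 0 < ρ)
    (hΦ : (ρ + l1 - f1) * (ρ + l2 - f2) - l1 * l2 > 0)
    (β2 κ2 A0 B0 xstar : ℝ)
    (hκ2 : κ2 = (ρ + l1 - f1 * β2) / l1)
    (hA0 : A0 = l1 / (ρ + l1 - f1))
    (hB0 : B0 = -(l1 * K) / (ρ + l1))
    (hx : xstar = -(K + κ2 * B0) / (κ2 * A0 - 1)) :
    xstar = ((ρ + l1 - f1) / (ρ + l1)) * (K * β2 / (β2 - 1)) := by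
  have ha : ρ + l1 - f1 ≠ 0 := by
    intro h
    rw [h, zero_mul] at hΦ
    nlinarith [mul_pos hl1 hl2]
  subst hκ2 hA0 hB0 hx
  exact selling_threshold_eq hl1.ne' hf1.ne' ha (by positivity)

theorem xstar_alternative
    (l1 l2 f1 f2 ρ K : ℝ)
    (hl1 : 0 < l1) (hl2 : 0 < l2) (hf1 : 0 < f1) (hf2 : f2 < 0)
    (hρ : 0 < ρ) (hρf1 : ρ ≤ f1) (hK : 0 < K)
    (hΦ : (ρ + l1 - f1) * (ρ + l2 - f2) - l1 * l2 > 0)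
    (D1 D2 β2 κ2 A0 B0 xstar : ℝ)
    (hD1 : D1 = (ρ + l1) * f2 + (ρ + l2) * f1)
    (hD2 : D2 = (ρ + l1) * (ρ + l2) - l1 * l2)
    (hβ2 : β2 = (D1 - Real.sqrt (D1 ^ 2 - 4 * f1 * f2 * D2)) / (2 * f1 * f2))
    (hκ2 : κ2 = (ρ + l1 - f1 * β2) / l1)
    (hA0 : A0 = l1 / (ρ + l1 - f1))
    (hB0 : B0 = -(l1 * K) / (ρ + l1))
    (hx : xstar = -(K + κ2 * B0) / (κ2 * A0 - 1)) :
    xstar = ((ρ + l1 - f1) / (ρ + l1)) * (K * β2 / (β2 - 1)) :=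
  xstar_alternative_general l1 l2 f1 f2 ρ K hl1 hl2 hf1 hρ hΦ β2 κ2 A0 B0 xstar hκ2 hA0 hB0 hx
end

section
/- Let λ₁, λ₂ > 0, f₁ > 0, f₂ < 0, 0 < ρ ≤ f₁ with Φ(ρ) > 0, K > 0. With x* = ((ρ+λ₁-f₁)/(ρ+λ₁)) · (Kβ₂/(β₂-1)), A₀ = λ₁/(ρ+λ₁-f₁), B₀ = -λ₁K/(ρ+λ₁), A₂ = (A₀x* + B₀)/(x*)^{β₂}, and κ₂ = (ρ+λ₁-f₁β₂)/λ₁, we have β₂κ₂A₂(x*)^{β₂-1} < 1. -/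
set_option maxHeartbeats 1000000


theorem convex2_ineq
    (l1 l2 f1 f2 ρ K : ℝ)
    (hl1 : 0 < l1) (hl2 : 0 < l2) (hf1 : 0 < f1) (hf2 : f2 < 0)
    (hρ : 0 < ρ) (hρf1 : ρ ≤ f1) (hK : 0 < K)
    (hΦ : (ρ + l1 - f1) * (ρ + l2 - f2) - l1 * l2 > 0)
    (D1 D2 β2 κ2 A0 B0 xstar A2 : ℝ)
    (hD1 : D1 = (ρ + l1) * f2 + (ρ + l2) * f1)
    (hD2 : D2 = (ρ + l1) * (ρ + l2) - l1 * l2)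
    (hβ2 : β2 = (D1 - Real.sqrt (D1 ^ 2 - 4 * f1 * f2 * D2)) / (2 * f1 * f2))
    (hκ2 : κ2 = (ρ + l1 - f1 * β2) / l1)
    (hA0 : A0 = l1 / (ρ + l1 - f1))
    (hB0 : B0 = -(l1 * K) / (ρ + l1))
    (hx : xstar = ((ρ + l1 - f1) / (ρ + l1)) * (K * β2 / (β2 - 1)))
    (hA2 : A2 = (A0 * xstar + B0) / xstar ^ β2) :
    β2 * κ2 * A2 * xstar ^ (β2 - 1) < 1 := by
  have ha : 0 < ρ + l1 - f1 := by nlinarith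
  have hb : 0 < ρ + l1 := by linarith
  have hab : ρ + l1 - f1 < ρ + l1 := by linarith
  have hff : f1 * f2 < 0 := mul_neg_of_pos_of_neg hf1 hf2
  have hD2pos : 0 < D2 := by rw [hD2]; nlinarith
  set Δ := D1 ^ 2 - 4 * f1 * f2 * D2 with hΔ
  have hΔpos : 0 < Δ := by rw [hΔ]; nlinarith
  set s := Real.sqrt Δ with hs
  have hs2 : s ^ 2 = Δ := Real.sq_sqrt hΔpos.le
  have hspos : 0 < s := Real.sqrt_pos.mpr hΔpos
  have hQ1 : f1 * f2 - D1 + D2 > 0 := by rw [hD1, hD2]; nlinarith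
  have hkey : D1 - 2 * (f1 * f2) < s := by
    by_contra h
    push_neg at h
    have h1 : D1 ^ 2 - 4 * f1 * f2 * D2 ≤ (D1 - 2 * (f1 * f2)) ^ 2 := by
      rw [← hΔ, ← hs2]
      nlinarith [hspos, h]
    nlinarith [mul_pos (neg_pos.mpr hff) hQ1, h1]
  have hβgt : 1 < β2 := by
    rw [hβ2, lt_div_iff_of_neg (by nlinarith : 2 * f1 * f2 < 0)]
    linarith [hkey]
  have hβm1 : 0 < β2 - 1 := by linarith
  have hx0 : 0 < xstar := by
    rw [hx]
    positivity
  have hxne : xstar ≠ 0 := ne_of_gt hx0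
  have hP : κ2 * (A0 * xstar + B0) = xstar - K := by
    rw [hκ2, hA0, hB0, hx]
    field_simp
    ring
  have hrp : (0:ℝ) < xstar ^ β2 := Real.rpow_pos_of_pos hx0 β2
  have hE : β2 * κ2 * A2 * xstar ^ (β2 - 1) = β2 * (xstar - K) / xstar := by
    rw [hA2, Real.rpow_sub hx0, Real.rpow_one, ← hP]
    field_simp
  rw [hE, div_lt_one hx0]
  have hxval : xstar * (β2 - 1) = ((ρ + l1 - f1) / (ρ + l1)) * (K * β2) := by
    rw [hx]; field_simp
  have hlt : ((ρ + l1 - f1) / (ρ + l1)) * (K * β2) < K * β2 := by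
    have : (ρ + l1 - f1) / (ρ + l1) < 1 := (div_lt_one hb).mpr hab
    nlinarith [mul_pos hK (by linarith : (0:ℝ) < β2)]
  nlinarith [hxval, hlt]
end

section
/- Let λ₁, λ₂ > 0, f₁ > 0, f₂ < 0, 0 < ρ ≤ f₁ with Φ(ρ) > 0. Then β₂/(β₂-1) ≥ D₂/Φ(ρ), where β₂ is the positive root of f₁f₂β² - D₁β + D₂ = 0, D₁ = (ρ+λ₁)f₂ + (ρ+λ₂)f₁, and D₂ = (ρ+λ₁)(ρ+λ₂) - λ₁λ₂. -/
/-!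
With `a = f₁f₂ < 0`, `b = -D₁`, `c = D₂`, the number `β₂` is the root `(-b - √Δ)/(2a)` of
`q(x) = a x² + b x + c`, and `q(1) = a + b + c = Φ(ρ)`. Since `a < 0` and `q(1) > 0`, the point `1`
lies strictly between the roots, so `β₂ > 1`. Clearing denominators, the claimed inequality becomes
`x (a + b) + c ≥ 0`, and at a root this quantity equals `a x (1 - x)`, which is nonnegative for
`a < 0 < 1 < x`.
-/

open Real

section Quadratic

variable {a b c : ℝ}

/-- `(2at + b)² = Δ + 4a q(t)`. -/
lemma sq_two_mul_add_lt_discrim (ha : a < 0) {t : ℝ} (ht : 0 < a * t ^ 2 + b * t + c) :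
    (2 * a * t + b) ^ 2 < discrim a b c := by
  rw [discrim]
  nlinarith [mul_neg_of_neg_of_pos ha ht]

lemma lt_quadratic_root_of_neg (ha : a < 0) {t : ℝ} (ht : 0 < a * t ^ 2 + b * t + c) :
    t < (-b - √(discrim a b c)) / (2 * a) := by
  have hs : -(2 * a * t + b) < √(discrim a b c) :=
    Real.lt_sqrt_of_sq_lt (by rw [neg_sq]; exact sq_two_mul_add_lt_discrim ha ht)
  rw [lt_div_iff_of_neg (by linarith)]
  linarith

lemma quadratic_root_eq_zero (ha : a ≠ 0) (hΔ : 0 ≤ discrim a b c) :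
    let x := (-b - √(discrim a b c)) / (2 * a)
    a * (x * x) + b * x + c = 0 :=
  (quadratic_eq_zero_iff ha (Real.mul_self_sqrt hΔ).symm _).2 (Or.inr rfl)

lemma div_le_div_sub_one_of_quadratic_eq_zero (ha : a < 0) {x : ℝ}
    (hx : a * (x * x) + b * x + c = 0) (hx1 : 1 < x) (h1 : 0 < a + b + c) :
    c / (a + b + c) ≤ x / (x - 1) := by
  rw [div_le_div_iff₀ h1 (by linarith)]
  have hroot : x * (a + b) + c = a * x * (1 - x) := by linear_combination hx
  nlinarith [mul_nonneg (mul_nonneg (neg_nonneg.2 ha.le) (by linarith : (0 : ℝ) ≤ x))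
    (by linarith : (0 : ℝ) ≤ x - 1)]

end Quadratic

theorem beta2_ratio_ineq_general
    (l1 l2 f1 f2 ρ : ℝ)
    (hf1 : 0 < f1) (hf2 : f2 < 0)
    (hΦ : (ρ + l1 - f1) * (ρ + l2 - f2) - l1 * l2 > 0)
    (D1 D2 β2 : ℝ)
    (hD1 : D1 = (ρ + l1) * f2 + (ρ + l2) * f1)
    (hD2 : D2 = (ρ + l1) * (ρ + l2) - l1 * l2)
    (hβ2 : β2 = (D1 - Real.sqrt (D1 ^ 2 - 4 * f1 * f2 * D2)) / (2 * f1 * f2)) :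
    β2 / (β2 - 1) ≥ D2 / ((ρ + l1 - f1) * (ρ + l2 - f2) - l1 * l2) := by
  have ha : f1 * f2 < 0 := mul_neg_of_pos_of_neg hf1 hf2
  have hΦ_eq : (ρ + l1 - f1) * (ρ + l2 - f2) - l1 * l2 = f1 * f2 + -D1 + D2 := by
    rw [hD1, hD2]; ring
  have hΔ : discrim (f1 * f2) (-D1) D2 = D1 ^ 2 - 4 * f1 * f2 * D2 := by
    rw [discrim]; ring
  have hβ2_root : β2 = (-(-D1) - √(discrim (f1 * f2) (-D1) D2)) / (2 * (f1 * f2)) := by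
    rw [hβ2, hΔ, neg_neg, mul_assoc 2 f1 f2]
  rw [hΦ_eq] at hΦ ⊢
  have hq1 : 0 < f1 * f2 * 1 ^ 2 + -D1 * 1 + D2 := by linarith
  have hβ2_gt : 1 < β2 := hβ2_root ▸ lt_quadratic_root_of_neg ha hq1
  have hΔ_nonneg : 0 ≤ discrim (f1 * f2) (-D1) D2 :=
    (sq_nonneg _).trans (sq_two_mul_add_lt_discrim ha hq1).le
  exact div_le_div_sub_one_of_quadratic_eq_zero ha
    (hβ2_root ▸ quadratic_root_eq_zero ha.ne hΔ_nonneg) hβ2_gt hΦ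

theorem beta2_ratio_ineq
    (l1 l2 f1 f2 ρ : ℝ)
    (hl1 : 0 < l1) (hl2 : 0 < l2) (hf1 : 0 < f1) (hf2 : f2 < 0)
    (hρ : 0 < ρ) (hρf1 : ρ ≤ f1)
    (hΦ : (ρ + l1 - f1) * (ρ + l2 - f2) - l1 * l2 > 0)
    (D1 D2 β2 : ℝ)
    (hD1 : D1 = (ρ + l1) * f2 + (ρ + l2) * f1)
    (hD2 : D2 = (ρ + l1) * (ρ + l2) - l1 * l2)
    (hβ2 : β2 = (D1 - Real.sqrt (D1 ^ 2 - 4 * f1 * f2 * D2)) / (2 * f1 * f2)) :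
    β2 / (β2 - 1) ≥ D2 / ((ρ + l1 - f1) * (ρ + l2 - f2) - l1 * l2) :=
  beta2_ratio_ineq_general l1 l2 f1 f2 ρ hf1 hf2 hΦ D1 D2 β2 hD1 hD2 hβ2
end

section
/- Let λ₁, λ₂ > 0, f₁ > 0, f₂ < 0, 0 < ρ ≤ f₁ with Φ(ρ) > 0, K > 0. Set A₀ = λ₁/(ρ+λ₁-f₁), B₀ = -λ₁K/(ρ+λ₁), and x* = ((ρ+λ₁-f₁)/(ρ+λ₁))·(Kβ₂/(β₂-1)). Then for all x ≥ x*, ρ(x - K) ≥ xf₂ + λ₂(A₀x + B₀ - (x - K)). -/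
set_option maxHeartbeats 1000000


theorem fourth_vi_ineq
    (l1 l2 f1 f2 ρ K : ℝ)
    (hl1 : 0 < l1) (hl2 : 0 < l2) (hf1 : 0 < f1) (hf2 : f2 < 0)
    (hρ : 0 < ρ) (hρf1 : ρ ≤ f1) (hK : 0 < K)
    (hΦ : (ρ + l1 - f1) * (ρ + l2 - f2) - l1 * l2 > 0)
    (D1 D2 β2 A0 B0 xstar : ℝ)
    (hD1 : D1 = (ρ + l1) * f2 + (ρ + l2) * f1)
    (hD2 : D2 = (ρ + l1) * (ρ + l2) - l1 * l2)
    (hβ2 : β2 = (D1 - Real.sqrt (D1 ^ 2 - 4 * f1 * f2 * D2)) / (2 * f1 * f2))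
    (hA0 : A0 = l1 / (ρ + l1 - f1))
    (hB0 : B0 = -(l1 * K) / (ρ + l1))
    (hx : xstar = ((ρ + l1 - f1) / (ρ + l1)) * (K * β2 / (β2 - 1))) :
    ∀ x : ℝ, x ≥ xstar → ρ * (x - K) ≥ x * f2 + l2 * (A0 * x + B0 - (x - K)) := by
  have hp2 : 0 < ρ + l2 - f2 := by linarith
  have hQ : 0 < ρ + l1 - f1 := by nlinarith [mul_pos hl1 hl2]
  have hP : 0 < ρ + l1 := by linarith
  have hab : f1 * f2 < 0 := mul_neg_of_pos_of_neg hf1 hf2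
  have habne : f1 * f2 ≠ 0 := ne_of_lt hab
  have hf1ne : f1 ≠ 0 := ne_of_gt hf1
  have hf2ne : f2 ≠ 0 := ne_of_lt hf2
  have hD2pos : 0 < D2 := by rw [hD2]; nlinarith
  have hdisc : 0 < D1 ^ 2 - 4 * f1 * f2 * D2 := by
    nlinarith [sq_nonneg D1, mul_pos (neg_pos.mpr hab) hD2pos]
  set s := Real.sqrt (D1 ^ 2 - 4 * f1 * f2 * D2) with hs_def
  have hs2 : s ^ 2 = D1 ^ 2 - 4 * f1 * f2 * D2 := Real.sq_sqrt hdisc.le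
  have hs : 0 < s := Real.sqrt_pos.mpr hdisc
  clear_value s
  -- β2 satisfies the quadratic
  have hmul : β2 * (2 * (f1 * f2)) = D1 - s := by
    rw [hβ2]; field_simp
  have hquad : f1 * f2 * β2 ^ 2 - D1 * β2 + D2 = 0 := by
    have h0 : (4 * (f1 * f2)) * (f1 * f2 * β2 ^ 2 - D1 * β2 + D2) = 0 := by
      linear_combination (β2 * (2 * (f1 * f2)) + (D1 - s) - 2 * D1) * hmul + hs2
    rcases mul_eq_zero.mp h0 with h | h
    · exact absurd h (by positivity)
    · exact h
  -- the identity Φ = f1*f2 - D1 + D2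
  have hΦeq : (ρ + l1 - f1) * (ρ + l2 - f2) - l1 * l2 = f1 * f2 - D1 + D2 := by
    rw [hD1, hD2]; ring
  -- β2 > 1
  have hts : D1 - 2 * (f1 * f2) < s := by
    rcases le_or_gt (D1 - 2 * (f1 * f2)) 0 with h | h
    · linarith
    · have hid : s ^ 2 - (D1 - 2 * (f1 * f2)) ^ 2
          = (-(4 * (f1 * f2))) * ((ρ + l1 - f1) * (ρ + l2 - f2) - l1 * l2) := by
        rw [hs2, hD1, hD2]; ring
      have hsq : (D1 - 2 * (f1 * f2)) ^ 2 < s ^ 2 := by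
        nlinarith [hid, mul_pos (by nlinarith : (0:ℝ) < -(4 * (f1 * f2))) hΦ]
      exact lt_of_pow_lt_pow_left₀ 2 hs.le hsq
  have hβ1 : 1 < β2 := by
    have h2 : β2 * (2 * (f1 * f2)) < 1 * (2 * (f1 * f2)) := by rw [hmul]; linarith
    nlinarith [h2, hab]
  have hb1 : 0 < β2 - 1 := by linarith
  have hβpos : 0 < β2 := by linarith
  -- key inequality : Φ * β2 > D2 * (β2 - 1)
  have key : ((ρ + l1 - f1) * (ρ + l2 - f2) - l1 * l2) * β2 - D2 * (β2 - 1) > 0 := by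
    nlinarith [hquad, mul_pos (neg_pos.mpr hab) (mul_pos hβpos hb1), hΦeq]
  intro x hxge
  -- division-free form of x ≥ xstar
  have hxstar_eq : xstar = ((ρ + l1 - f1) * (K * β2)) / ((ρ + l1) * (β2 - 1)) := by
    rw [hx, div_mul_div_comm]
  have hx' : (ρ + l1 - f1) * (K * β2) ≤ x * ((ρ + l1) * (β2 - 1)) := by
    rw [hxstar_eq] at hxge
    exact (div_le_iff₀ (mul_pos hP hb1)).mp hxge
  set Φ := (ρ + l1 - f1) * (ρ + l2 - f2) - l1 * l2 with hΦdef
  have h₁ : Φ * ((ρ + l1 - f1) * (K * β2)) ≤ Φ * (x * ((ρ + l1) * (β2 - 1))) :=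
    mul_le_mul_of_nonneg_left hx' (le_of_lt hΦ)
  have h₂ : 0 ≤ K * ((ρ + l1 - f1) * (Φ * β2 - D2 * (β2 - 1))) :=
    mul_nonneg hK.le (mul_nonneg hQ.le (by linarith [key]))
  have hN : 0 ≤ (x * (Φ * (ρ + l1)) - K * D2 * (ρ + l1 - f1)) * (β2 - 1) := by
    nlinarith [h₁, h₂]
  have hN2 : 0 ≤ x * (Φ * (ρ + l1)) - K * D2 * (ρ + l1 - f1) := by
    nlinarith [hN, hb1]
  rw [ge_iff_le, ← sub_nonneg, hA0, hB0]
  have hgoal_eq : ρ * (x - K) - (x * f2 + l2 * (l1 / (ρ + l1 - f1) * x + -(l1 * K) / (ρ + l1) - (x - K)))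
      = (x * (Φ * (ρ + l1)) - K * D2 * (ρ + l1 - f1)) / ((ρ + l1 - f1) * (ρ + l1)) := by
    rw [hΦdef, hD2]
    field_simp
    ring
  rw [hgoal_eq]
  exact div_nonneg hN2 (mul_pos hQ hP).le
end

section
/- Let λ₁, λ₂ > 0, f₁ > 0, f₂ < 0, 0 < ρ ≤ f₁ with Φ(ρ) > 0, K > 0. With x* = ((ρ+λ₁-f₁)/(ρ+λ₁))·(Kβ₂/(β₂-1)), A₀ = λ₁/(ρ+λ₁-f₁), B₀ = -λ₁K/(ρ+λ₁), and A₂ = (A₀x* + B₀)/(x*)^{β₂}, the smooth-fit condition β₂A₂(x*)^{β₂-1} = A₀ holds, i.e., the function v(x,1) defined as A₂x^{β₂} for x ≤ x* and A₀x + B₀ for x > x* is differentiable at x = x*. -/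
/-! With `a = ρ + λ₁ - f₁` and `b = ρ + λ₁`, the linear branch at `x*` equals
`λ₁ K / (b (β₂ - 1))`, so `β₂ (A₀ x* + B₀) = A₀ x*`. Since `A₂` is chosen to make the two branches
agree at `x*`, the left slope `β₂ A₂ x*^(β₂-1) = β₂ (A₀ x* + B₀) / x*` is then `A₀`, the right slope.
This needs `x* > 0`: `a > 0` follows from `Φ(ρ) > 0`, and `β₂ > 1` because the quadratic
`f₁ f₂ β² - D₁ β + D₂` has negative leading coefficient and takes the value `Φ(ρ) > 0` at `β = 1`. -/

open Real

theorem one_lt_quadratic_root {c D₁ D₂ : ℝ} (hc : c < 0) (hone : 0 < c - D₁ + D₂) :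
    1 < (D₁ - √(D₁ ^ 2 - 4 * c * D₂)) / (2 * c) := by
  rw [lt_div_iff_of_neg (by linarith)]
  have : D₁ - 2 * c < √(D₁ ^ 2 - 4 * c * D₂) :=
    lt_sqrt_of_sq_lt (by nlinarith [mul_neg_of_neg_of_pos hc hone])
  linarith

theorem smooth_fit_identity {a b l K β : ℝ} (ha : a ≠ 0) (hb : b ≠ 0) (hβ : β ≠ 1) :
    β * (l / a * (a / b * (K * β / (β - 1))) + -(l * K) / b) =
      l / a * (a / b * (K * β / (β - 1))) := by
  have : β - 1 ≠ 0 := sub_ne_zero.mpr hβ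
  field_simp
  ring

theorem mul_div_rpow_mul_rpow_sub_one {x β v : ℝ} (hx : 0 < x) :
    β * (v / x ^ β) * x ^ (β - 1) = β * v / x := by
  rw [rpow_sub_one hx.ne']
  have : x ^ β ≠ 0 := (rpow_pos_of_pos hx β).ne'
  field_simp

theorem HasDerivAt.ite_le {F : Type*} [NormedAddCommGroup F] [NormedSpace ℝ F] {f g : ℝ → F}
    {f' : F} {a : ℝ} (hf : HasDerivAt f f' a) (hg : HasDerivAt g f' a) (hfg : f a = g a) :
    HasDerivAt (fun x => if x ≤ a then f x else g x) f' a := by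
  have hleft : HasDerivWithinAt (fun x => if x ≤ a then f x else g x) f' (Set.Iic a) a :=
    hf.hasDerivWithinAt.congr (fun x hx => if_pos hx) (if_pos le_rfl)
  have hright : HasDerivWithinAt (fun x => if x ≤ a then f x else g x) f' (Set.Ici a) a := by
    refine hg.hasDerivWithinAt.congr (fun x hx => ?_) (by simp [hfg])
    rcases (Set.mem_Ici.mp hx).eq_or_lt with rfl | hlt
    · simp [hfg]
    · exact if_neg hlt.not_ge
  simpa [Set.Iic_union_Ici] using hleft.union hright

theorem smooth_fit_state1_general
    (l1 l2 f1 f2 ρ K : ℝ)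
    (hl1 : 0 < l1) (hl2 : 0 < l2) (hf1 : 0 < f1) (hf2 : f2 < 0)
    (hρ : 0 < ρ) (hK : 0 < K)
    (hΦ : (ρ + l1 - f1) * (ρ + l2 - f2) - l1 * l2 > 0)
    (D1 D2 β2 A0 B0 xstar A2 : ℝ)
    (hD1 : D1 = (ρ + l1) * f2 + (ρ + l2) * f1)
    (hD2 : D2 = (ρ + l1) * (ρ + l2) - l1 * l2)
    (hβ2 : β2 = (D1 - Real.sqrt (D1 ^ 2 - 4 * f1 * f2 * D2)) / (2 * f1 * f2))
    (hA0 : A0 = l1 / (ρ + l1 - f1))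
    (hB0 : B0 = -(l1 * K) / (ρ + l1))
    (hx : xstar = ((ρ + l1 - f1) / (ρ + l1)) * (K * β2 / (β2 - 1)))
    (hA2 : A2 = (A0 * xstar + B0) / xstar ^ β2) :
    β2 * A2 * xstar ^ (β2 - 1) = A0 ∧
    DifferentiableAt ℝ
      (fun x : ℝ => if x ≤ xstar then A2 * x ^ β2 else A0 * x + B0) xstar := by
  have ha : 0 < ρ + l1 - f1 := by nlinarith [mul_pos hl1 hl2]
  have hb : 0 < ρ + l1 := by linarith
  have hβ : 1 < β2 := by
    have hone : 0 < f1 * f2 - D1 + D2 := by rw [hD1, hD2]; linarith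
    simpa only [hβ2, mul_assoc] using one_lt_quadratic_root (mul_neg_of_pos_of_neg hf1 hf2) hone
  have hxpos : 0 < xstar := by
    rw [hx]; exact mul_pos (div_pos ha hb) (div_pos (by positivity) (by linarith))
  have hkey : β2 * (A0 * xstar + B0) = A0 * xstar := by
    subst hA0 hB0 hx; exact smooth_fit_identity ha.ne' hb.ne' hβ.ne'
  have hsf : β2 * A2 * xstar ^ (β2 - 1) = A0 := by
    rw [hA2, mul_div_rpow_mul_rpow_sub_one hxpos, hkey, mul_div_cancel_right₀ _ hxpos.ne']
  have hpow : HasDerivAt (fun x => A2 * x ^ β2) A0 xstar := by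
    refine ((hasDerivAt_rpow_const (Or.inl hxpos.ne')).const_mul A2).congr_deriv ?_
    rw [← hsf]; ring
  have hlin : HasDerivAt (fun x => A0 * x + B0) A0 xstar := by
    simpa using ((hasDerivAt_id xstar).const_mul A0).add_const B0
  have hcont : A2 * xstar ^ β2 = A0 * xstar + B0 := by
    rw [hA2]; field_simp
  exact ⟨hsf, (hpow.ite_le hlin hcont).differentiableAt⟩

theorem smooth_fit_state1
    (l1 l2 f1 f2 ρ K : ℝ)
    (hl1 : 0 < l1) (hl2 : 0 < l2) (hf1 : 0 < f1) (hf2 : f2 < 0)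
    (hρ : 0 < ρ) (hρf1 : ρ ≤ f1) (hK : 0 < K)
    (hΦ : (ρ + l1 - f1) * (ρ + l2 - f2) - l1 * l2 > 0)
    (D1 D2 β2 A0 B0 xstar A2 : ℝ)
    (hD1 : D1 = (ρ + l1) * f2 + (ρ + l2) * f1)
    (hD2 : D2 = (ρ + l1) * (ρ + l2) - l1 * l2)
    (hβ2 : β2 = (D1 - Real.sqrt (D1 ^ 2 - 4 * f1 * f2 * D2)) / (2 * f1 * f2))
    (hA0 : A0 = l1 / (ρ + l1 - f1))
    (hB0 : B0 = -(l1 * K) / (ρ + l1))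
    (hx : xstar = ((ρ + l1 - f1) / (ρ + l1)) * (K * β2 / (β2 - 1)))
    (hA2 : A2 = (A0 * xstar + B0) / xstar ^ β2) :
    β2 * A2 * xstar ^ (β2 - 1) = A0 ∧
    DifferentiableAt ℝ
      (fun x : ℝ => if x ≤ xstar then A2 * x ^ β2 else A0 * x + B0) xstar :=
  smooth_fit_state1_general l1 l2 f1 f2 ρ K hl1 hl2 hf1 hf2 hρ hK hΦ D1 D2 β2 A0 B0 xstar A2 hD1 hD2
    hβ2 hA0 hB0 hx hA2
end

section
/- Let λ₁ > 0, f₁ > 0, ρ > f₁, K > 0. Define γ₁ = (ρ+λ₁)/f₁, A₀ = λ₁/(ρ+λ₁-f₁), B₀ = -λ₁K/(ρ+λ₁), x₀* = ρK/(ρ-f₁), and C₁ = (x₀* - K - (A₀x₀* + B₀))/(x₀*)^{γ₁}. Then C₁ > 0 and γ₁C₁(x₀*)^{γ₁-1} + A₀ = 1. -/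
theorem C1_pos_and_smooth_fit
    (l1 f1 ρ K : ℝ)
    (hl1 : 0 < l1) (hf1 : 0 < f1) (hρf1 : ρ > f1) (hK : 0 < K)
    (γ1 A0 B0 x0star C1 : ℝ)
    (hγ1 : γ1 = (ρ + l1) / f1)
    (hA0 : A0 = l1 / (ρ + l1 - f1))
    (hB0 : B0 = -(l1 * K) / (ρ + l1))
    (hx0 : x0star = ρ * K / (ρ - f1))
    (hC1 : C1 = (x0star - K - (A0 * x0star + B0)) / x0star ^ γ1) :
    C1 > 0 ∧ γ1 * C1 * x0star ^ (γ1 - 1) + A0 = 1 := by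
  have hρ : 0 < ρ := hf1.trans hρf1
  have hρf : 0 < ρ - f1 := by linarith
  have hd1 : 0 < ρ + l1 - f1 := by linarith
  have hd2 : 0 < ρ + l1 := by linarith
  have hx0pos : 0 < x0star := by
    rw [hx0]; positivity
  have hP : 0 < x0star ^ γ1 := Real.rpow_pos_of_pos hx0pos γ1
  have hN : x0star - K - (A0 * x0star + B0) = K * f1 * ρ / ((ρ + l1 - f1) * (ρ + l1)) := by
    rw [hx0, hA0, hB0]
    field_simp
    ring
  have hNpos : 0 < x0star - K - (A0 * x0star + B0) := by
    rw [hN]; positivity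
  refine ⟨by rw [hC1]; exact div_pos hNpos hP, ?_⟩
  have hpow : x0star ^ (γ1 - 1) = x0star ^ γ1 / x0star := by
    rw [Real.rpow_sub hx0pos, Real.rpow_one]
  rw [hpow, hC1, hN]
  have h1 : γ1 * (K * f1 * ρ / ((ρ + l1 - f1) * (ρ + l1)) / x0star ^ γ1) *
      (x0star ^ γ1 / x0star) = γ1 * (K * f1 * ρ / ((ρ + l1 - f1) * (ρ + l1))) / x0star := by
    field_simp
  rw [h1, hγ1, hA0, hx0]
  field_simp
  ring
end

section
/- Let μ be real and σ > 0, ρ > 0. For ε > 0, set f₁ = μ + σ/√ε, f₂ = μ - σ/√ε, λ₁ = λ₂ = 1/ε, D₁(ε) = (ρ+λ₁)f₂ + (ρ+λ₂)f₁, D₂(ε) = (ρ+λ₁)(ρ+λ₂) - λ₁λ₂, and β₂(ε) = (D₁(ε) - sqrt(D₁(ε)² - 4f₁f₂D₂(ε)))/(2f₁f₂). Then β₂(ε) → (-μ + sqrt(μ² + 2ρσ²))/σ² as ε → 0⁺. -/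
/-!
For `ε > 0` the discriminant is `(2/ε)² (μ² + 2ρσ² + ρ²σ²ε)`, so after cancelling the common factor
`2/ε` from numerator and denominator,
`β₂(ε) = (μ(ρε + 1) - √(μ² + 2ρσ² + ρ²σ²ε)) / (μ²ε - σ²)`.
This expression is continuous at `ε = 0`, where its denominator is `-σ² ≠ 0`, and its value there
is the GBM exponent `β₀`.
-/

open Filter Topology

noncomputable def beta2 (μ σ ρ ε : ℝ) : ℝ :=
  let f1 := μ + σ / Real.sqrt ε
  let f2 := μ - σ / Real.sqrt ε
  let l1 := 1 / ε
  let l2 := 1 / ε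
  let D1 := (ρ + l1) * f2 + (ρ + l2) * f1
  let D2 := (ρ + l1) * (ρ + l2) - l1 * l2
  (D1 - Real.sqrt (D1 ^ 2 - 4 * f1 * f2 * D2)) / (2 * f1 * f2)

noncomputable def beta2ClosedForm (μ σ ρ ε : ℝ) : ℝ :=
  (μ * (ρ * ε + 1) - √(μ ^ 2 + 2 * ρ * σ ^ 2 + ρ ^ 2 * σ ^ 2 * ε)) / (μ ^ 2 * ε - σ ^ 2)

lemma beta2_discriminant_eq {μ σ ρ ε : ℝ} (hε : 0 < ε) :
    ((ρ + 1 / ε) * (μ - σ / √ε) + (ρ + 1 / ε) * (μ + σ / √ε)) ^ 2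
      - 4 * (μ + σ / √ε) * (μ - σ / √ε) * ((ρ + 1 / ε) * (ρ + 1 / ε) - 1 / ε * (1 / ε))
      = (2 / ε) ^ 2 * (μ ^ 2 + 2 * ρ * σ ^ 2 + ρ ^ 2 * σ ^ 2 * ε) := by
  obtain ⟨t, ht, rfl⟩ : ∃ t, 0 < t ∧ ε = t ^ 2 :=
    ⟨√ε, Real.sqrt_pos.mpr hε, (Real.sq_sqrt hε.le).symm⟩
  rw [Real.sqrt_sq ht.le]
  field_simp
  ring

lemma beta2_eq_closedForm {μ σ ρ ε : ℝ} (hε : 0 < ε) :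
    beta2 μ σ ρ ε = beta2ClosedForm μ σ ρ ε := by
  have ht : 0 < √ε := Real.sqrt_pos.mpr hε
  simp only [beta2, beta2ClosedForm]
  rw [beta2_discriminant_eq hε, Real.sqrt_mul (by positivity), Real.sqrt_sq (by positivity)]
  set s := √(μ ^ 2 + 2 * ρ * σ ^ 2 + ρ ^ 2 * σ ^ 2 * ε)
  calc _ = (2 / ε * (μ * (ρ * ε + 1) - s)) / (2 / ε * (μ ^ 2 * ε - σ ^ 2)) := by
        congr 1
        · field_simp
          ring
        · field_simp
          linear_combination σ ^ 2 * Real.sq_sqrt hε.le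
    _ = _ := mul_div_mul_left _ _ (by positivity)

lemma continuousAt_beta2ClosedForm_zero {μ σ : ℝ} (ρ : ℝ) (hσ : σ ≠ 0) :
    ContinuousAt (beta2ClosedForm μ σ ρ) 0 :=
  ContinuousAt.div (by fun_prop) (by fun_prop) (by simp [hσ])

lemma beta2ClosedForm_zero (μ σ ρ : ℝ) :
    beta2ClosedForm μ σ ρ 0 = (-μ + √(μ ^ 2 + 2 * ρ * σ ^ 2)) / σ ^ 2 := by
  simp only [beta2ClosedForm, mul_zero, zero_add, mul_one, add_zero, zero_sub, div_neg, ← neg_div]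
  rw [neg_sub, sub_eq_neg_add]

theorem beta2_converges_to_GBM_exponent_general
    (μ σ ρ : ℝ) (hσ : 0 < σ) :
    Filter.Tendsto
      (fun ε : ℝ =>
        let f1 := μ + σ / Real.sqrt ε
        let f2 := μ - σ / Real.sqrt ε
        let l1 := 1 / ε
        let l2 := 1 / ε
        let D1 := (ρ + l1) * f2 + (ρ + l2) * f1
        let D2 := (ρ + l1) * (ρ + l2) - l1 * l2
        (D1 - Real.sqrt (D1 ^ 2 - 4 * f1 * f2 * D2)) / (2 * f1 * f2))
      (nhdsWithin 0 (Set.Ioi 0))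
      (nhds ((-μ + Real.sqrt (μ ^ 2 + 2 * ρ * σ ^ 2)) / σ ^ 2)) := by
  change Tendsto (beta2 μ σ ρ) _ _
  have hlim : Tendsto (beta2ClosedForm μ σ ρ) (𝓝[>] 0)
      (𝓝 ((-μ + √(μ ^ 2 + 2 * ρ * σ ^ 2)) / σ ^ 2)) := by
    rw [← beta2ClosedForm_zero]
    exact (continuousAt_beta2ClosedForm_zero ρ hσ.ne').tendsto.mono_left nhdsWithin_le_nhds
  refine hlim.congr' ?_
  filter_upwards [self_mem_nhdsWithin] with ε hε using (beta2_eq_closedForm hε).symm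

theorem beta2_converges_to_GBM_exponent
    (μ σ ρ : ℝ) (hσ : 0 < σ) (hρ : 0 < ρ) :
    Filter.Tendsto
      (fun ε : ℝ =>
        let f1 := μ + σ / Real.sqrt ε
        let f2 := μ - σ / Real.sqrt ε
        let l1 := 1 / ε
        let l2 := 1 / ε
        let D1 := (ρ + l1) * f2 + (ρ + l2) * f1
        let D2 := (ρ + l1) * (ρ + l2) - l1 * l2
        (D1 - Real.sqrt (D1 ^ 2 - 4 * f1 * f2 * D2)) / (2 * f1 * f2))
      (nhdsWithin 0 (Set.Ioi 0))
      (nhds ((-μ + Real.sqrt (μ ^ 2 + 2 * ρ * σ ^ 2)) / σ ^ 2)) :=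
  beta2_converges_to_GBM_exponent_general μ σ ρ hσ
end
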